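/- Let M be a finite monoid, φ : A* → M a morphism, and x, y ∈ M with x ∼_K y (for all idempotents e: either ex, ey <_J e, or ex = ey). If s ∈ M and there exists z ∈ M with sxz = s, then sx = sy. (Restatement of the key step of Lemma on lifting ∼_K-equality: from s = sxz one gets s = s(xz)^ω and (xz)^ω x J (xz)^ω, hence (xz)^ω x = (xz)^ω y and sx = sy.) -/
import Mathlib

variable {M : Type*}

def jLe [Monoid M] (u v : M) : Prop := ∃ p q, u = p * v * q
def jLt [Monoid M] (u v : M) : Prop := jLe u v ∧ ¬ jLe v u
def simK [Monoid M] (x y : M) : Prop :=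
  ∀ e : M, e * e = e → (jLt (e * x) e ∧ jLt (e * y) e) ∨ e * x = e * y

lemma exists_idem_pow [Monoid M] [Finite M] (a : M) :
    ∃ n : ℕ, 1 ≤ n ∧ a ^ n * a ^ n = a ^ n := by
  obtain ⟨i, j, hij, h⟩ := Finite.exists_ne_map_eq_of_infinite (fun n : ℕ => a ^ n)
  wlog hlt : i < j generalizing i j
  · exact this j i hij.symm h.symm (by omega)
  set p := j - i with hp
  have hp0 : 0 < p := by omega
  have base : ∀ m, i ≤ m → a ^ (m + p) = a ^ m := by
    intro m hm
    have h1 : a ^ (m + p) = a ^ (m - i) * a ^ j := by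
      rw [← pow_add]; congr 1; omega
    have h2 : a ^ m = a ^ (m - i) * a ^ i := by
      rw [← pow_add]; congr 1; omega
    rw [h1, h2, ← h]
  have key : ∀ m k, i ≤ m → a ^ (m + k * p) = a ^ m := by
    intro m k hm
    induction k with
    | zero => simp
    | succ k ih =>
      rw [Nat.succ_mul, ← Nat.add_assoc, base (m + k * p) (by omega), ih]
  have hn : i ≤ (i + 1) * p := by nlinarith
  refine ⟨(i + 1) * p, Nat.mul_pos (by omega) hp0, ?_⟩
  rw [← pow_add, key ((i + 1) * p) (i + 1) hn]

theorem stmt17 [Monoid M] [Finite M] (x y s : M)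
    (hK : simK x y) (hz : ∃ z : M, s * x * z = s) : s * x = s * y := by
  obtain ⟨z, hsz⟩ := hz
  obtain ⟨n, hn1, hidem⟩ := exists_idem_pow (x * z)
  have hse : s * (x * z) ^ n = s := by
    clear hn1 hidem
    induction n with
    | zero => simp
    | succ m ih =>
      rw [pow_succ, ← mul_assoc, ih, ← mul_assoc]
      exact hsz
  have hnotlt : ¬ jLt ((x * z) ^ n * x) ((x * z) ^ n) := by
    rintro ⟨-, hne⟩
    apply hne
    refine ⟨1, z * (x * z) ^ (n - 1), ?_⟩
    rw [one_mul, mul_assoc, ← mul_assoc x z, ← pow_succ' (x * z),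
      show n - 1 + 1 = n by omega, hidem]
  have hexy : (x * z) ^ n * x = (x * z) ^ n * y := by
    rcases hK _ hidem with ⟨h1, _⟩ | h
    · exact absurd h1 hnotlt
    · exact h
  calc s * x = s * (x * z) ^ n * x := by rw [hse]
    _ = s * ((x * z) ^ n * x) := by rw [mul_assoc]
    _ = s * ((x * z) ^ n * y) := by rw [hexy]
    _ = s * y := by rw [← mul_assoc, hse]
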